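/- The martingale difference noise M_{j,k+1} := z_j b_j sin(Ω_j k̂ + φ_j)(r̃_{j,k+1} − E_S[r_j(S, a_{k+1})]) satisfies the conditional second moment bound E[‖M_{k+1}‖² | ℱ_k] ≤ c(1 + ‖a_k‖²) for a constant c ≥ 4 z² b² (β + L̇), where z = max_j |z_j|, b = max_j |b_j|, β = E_S[β_{1,S}²] + β_2², β_{1,S} = ‖r(S,0)‖, β_2 = E_S‖r(S,0)‖, and L̇ = E_S[L_S²] + (E_S L_S)². -/

import Mathlib

/-!
Bounding `|r(S, a)| ≤ |r(S, 0)| + L_S ‖a‖` by the Lipschitz property and integrating gives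
`|E_S r(S, a)| ≤ E_S |r(S, 0)| + (E_S L_S) ‖a‖`. The centred reward is therefore dominated by a
sum of four terms, and `(x₁ + x₂ + x₃ + x₄)² ≤ 4 (x₁² + x₂² + x₃² + x₄²)` turns this into the
stated second-moment bound; the factor `sin² θ` is at most `1`.
-/

open MeasureTheory

lemma add_add_add_sq_le (x₁ x₂ x₃ x₄ : ℝ) :
    (x₁ + x₂ + x₃ + x₄) ^ 2 ≤ 4 * (x₁ ^ 2 + x₂ ^ 2 + x₃ ^ 2 + x₄ ^ 2) := by
  nlinarith [sq_nonneg (x₁ - x₂), sq_nonneg (x₁ - x₃), sq_nonneg (x₁ - x₄),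
    sq_nonneg (x₂ - x₃), sq_nonneg (x₂ - x₄), sq_nonneg (x₃ - x₄)]

section CentredSecondMoment

variable {S : Type*} [MeasurableSpace S] {μ : Measure S} {f u v : S → ℝ}

lemma sq_sub_integral_le_of_abs_le_add (hu : Integrable u μ) (hv : Integrable v μ)
    (hf : ∀ s, |f s| ≤ u s + v s) (s : S) :
    (f s - ∫ t, f t ∂μ) ^ 2 ≤
      4 * (u s ^ 2 + v s ^ 2 + ((∫ t, u t ∂μ) ^ 2 + (∫ t, v t ∂μ) ^ 2)) := by
  have hmean : |∫ t, f t ∂μ| ≤ (∫ t, u t ∂μ) + ∫ t, v t ∂μ := by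
    rw [← integral_add hu hv]
    exact norm_integral_le_of_norm_le (f := f) (g := fun s => u s + v s) (hu.add hv)
      (.of_forall hf)
  have hcentred : |f s - ∫ t, f t ∂μ| ≤ u s + (∫ t, u t ∂μ) + v s + ∫ t, v t ∂μ := by
    linarith [abs_sub (f s) (∫ t, f t ∂μ), hf s]
  calc (f s - ∫ t, f t ∂μ) ^ 2 ≤ (u s + (∫ t, u t ∂μ) + v s + ∫ t, v t ∂μ) ^ 2 :=
        sq_le_sq' (abs_le.mp hcentred).1 (abs_le.mp hcentred).2
    _ ≤ _ := by linarith [add_add_add_sq_le (u s) (∫ t, u t ∂μ) (v s) (∫ t, v t ∂μ)]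

lemma integral_sq_sub_integral_le_of_abs_le_add [IsProbabilityMeasure μ]
    (hu : Integrable u μ) (hv : Integrable v μ)
    (hu2 : Integrable (fun s => u s ^ 2) μ) (hv2 : Integrable (fun s => v s ^ 2) μ)
    (hf : ∀ s, |f s| ≤ u s + v s) :
    ∫ s, (f s - ∫ t, f t ∂μ) ^ 2 ∂μ ≤
      4 * ((∫ s, u s ^ 2 ∂μ) + (∫ s, u s ∂μ) ^ 2 + ((∫ s, v s ^ 2 ∂μ) + (∫ s, v s ∂μ) ^ 2)) := by
  have hbound_int : Integrable
      (fun s => 4 * (u s ^ 2 + v s ^ 2 + ((∫ t, u t ∂μ) ^ 2 + (∫ t, v t ∂μ) ^ 2))) μ :=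
    ((hu2.add hv2).add (integrable_const _)).const_mul 4
  calc ∫ s, (f s - ∫ t, f t ∂μ) ^ 2 ∂μ
      ≤ ∫ s, 4 * (u s ^ 2 + v s ^ 2 + ((∫ t, u t ∂μ) ^ 2 + (∫ t, v t ∂μ) ^ 2)) ∂μ :=
        integral_mono_of_nonneg (.of_forall fun _ => sq_nonneg _) hbound_int
          (.of_forall (sq_sub_integral_le_of_abs_le_add hu hv hf))
    _ = _ := by
        rw [integral_const_mul, integral_add (f := fun s => u s ^ 2 + v s ^ 2) (hu2.add hv2)
          (integrable_const _), integral_add hu2 hv2]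
        simp only [integral_const, probReal_univ, one_smul]
        ring

end CentredSecondMoment

theorem martingale_noise_second_moment_bound_general
    {S : Type*} [MeasurableSpace S] (μ : Measure S) [IsProbabilityMeasure μ]
    {A : Type*} [NormedAddCommGroup A]
    (r : S → A → ℝ) (L : S → ℝ)
    (hLip : ∀ s a a', |r s a - r s a'| ≤ L s * ‖a - a'‖)
    (hLint : Integrable L μ) (hL2int : Integrable (fun s => (L s) ^ 2) μ)
    (hr0int : Integrable (fun s => |r s 0|) μ)
    (hr0sqint : Integrable (fun s => (|r s 0|) ^ 2) μ)
    (z b θ : ℝ) (a : A)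
    (c : ℝ)
    (hc : 4 * z ^ 2 * b ^ 2 *
        ((∫ s, (|r s 0|) ^ 2 ∂μ) + (∫ s, |r s 0| ∂μ) ^ 2 +
          ((∫ s, (L s) ^ 2 ∂μ) + (∫ s, L s ∂μ) ^ 2)) ≤ c) :
    (∫ s, (z * b * Real.sin θ * (r s a - ∫ s', r s' a ∂μ)) ^ 2 ∂μ)
      ≤ c * (1 + ‖a‖ ^ 2) := by
  have hgrowth : ∀ s, |r s a| ≤ |r s 0| + L s * ‖a‖ := fun s => by
    linarith [abs_sub_abs_le_abs_sub (r s a) (r s 0), sub_zero a ▸ hLip s a 0]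
  have hcentred := integral_sq_sub_integral_le_of_abs_le_add hr0int (hLint.mul_const ‖a‖)
    hr0sqint (by simpa only [mul_pow] using hL2int.mul_const (‖a‖ ^ 2)) hgrowth
  simp only [mul_pow, integral_mul_const] at hcentred
  have hβ : 0 ≤ (∫ s, (|r s 0|) ^ 2 ∂μ) + (∫ s, |r s 0| ∂μ) ^ 2 := by positivity
  have hL : 0 ≤ (∫ s, (L s) ^ 2 ∂μ) + (∫ s, L s ∂μ) ^ 2 := by positivity
  have hzb : (z * b * Real.sin θ) ^ 2 ≤ z ^ 2 * b ^ 2 := by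
    rw [mul_pow, mul_pow]
    exact mul_le_of_le_one_right (by positivity) (Real.sin_sq_le_one θ)
  calc (∫ s, (z * b * Real.sin θ * (r s a - ∫ s', r s' a ∂μ)) ^ 2 ∂μ)
      = (z * b * Real.sin θ) ^ 2 * ∫ s, (r s a - ∫ s', r s' a ∂μ) ^ 2 ∂μ := by
        rw [← integral_const_mul]; simp only [mul_pow]
    _ ≤ z ^ 2 * b ^ 2 * (4 * ((∫ s, (|r s 0|) ^ 2 ∂μ) + (∫ s, |r s 0| ∂μ) ^ 2 +
          ((∫ s, (L s) ^ 2 ∂μ) + (∫ s, L s ∂μ) ^ 2) * ‖a‖ ^ 2)) := by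
        refine mul_le_mul hzb ?_ (integral_nonneg fun _ => sq_nonneg _) (by positivity)
        linarith
    _ ≤ c * (1 + ‖a‖ ^ 2) := by
        nlinarith [mul_le_mul_of_nonneg_right hc (sq_nonneg ‖a‖),
          mul_nonneg (mul_nonneg (by positivity : (0 : ℝ) ≤ 4 * z ^ 2 * b ^ 2) hβ)
            (sq_nonneg ‖a‖),
          mul_nonneg (by positivity : (0 : ℝ) ≤ 4 * z ^ 2 * b ^ 2) hL]

/-- Second moment bound on the martingale difference noise
`M(S) = z b sin(θ) (r(S,a) − E_S r(S,a))`: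
`E_S ‖M‖² ≤ c (1 + ‖a‖²)` for any `c ≥ 4 z² b² (β + L̇)`, where
`β = E_S[‖r(S,0)‖²] + (E_S‖r(S,0)‖)²` and `L̇ = E_S[L_S²] + (E_S L_S)²`. -/
theorem martingale_noise_second_moment_bound
    {S : Type*} [MeasurableSpace S] (μ : Measure S) [IsProbabilityMeasure μ]
    {A : Type*} [NormedAddCommGroup A] [NormedSpace ℝ A]
    (r : S → A → ℝ) (L : S → ℝ) (hL0 : ∀ s, 0 ≤ L s)
    (hLip : ∀ s a a', |r s a - r s a'| ≤ L s * ‖a - a'‖)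
    (hLint : Integrable L μ) (hL2int : Integrable (fun s => (L s) ^ 2) μ)
    (hr0int : Integrable (fun s => |r s 0|) μ)
    (hr0sqint : Integrable (fun s => (|r s 0|) ^ 2) μ)
    (hrint : ∀ a, Integrable (fun s => r s a) μ)
    (z b θ : ℝ) (a : A)
    (hMint : Integrable
      (fun s => (z * b * Real.sin θ * (r s a - ∫ s', r s' a ∂μ)) ^ 2) μ)
    (c : ℝ)
    (hc : 4 * z ^ 2 * b ^ 2 *
        ((∫ s, (|r s 0|) ^ 2 ∂μ) + (∫ s, |r s 0| ∂μ) ^ 2 +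
          ((∫ s, (L s) ^ 2 ∂μ) + (∫ s, L s ∂μ) ^ 2)) ≤ c) :
    (∫ s, (z * b * Real.sin θ * (r s a - ∫ s', r s' a ∂μ)) ^ 2 ∂μ)
      ≤ c * (1 + ‖a‖ ^ 2) :=
  martingale_noise_second_moment_bound_general μ r L hLip hLint hL2int hr0int hr0sqint z b θ a c hc
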